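/- Let ℛ be a linear growing TRS over 𝓖, let 𝒞_T(ℛ) be the saturated automaton, and let s ∈ 𝒯(𝓖) with s →_{𝒞_T(ℛ)}* q. Then: (1) if q = ⟨t⟩ with t ∈ S_ℛ ∪ {x} then s ∈ (→_ℛ*)[Σ(t)], i.e., s rewrites in ℛ to a ground instance of t; and (2) if q is a final state then s ∈ (→_ℛ*)[T]. -/

import Mathlib

set_option maxHeartbeats 1000000

/-! ## Terms over a signature -/

/-- Terms over a signature given by a type `F` of function symbols together with
an arity function `ar`; variables are natural numbers. -/
inductive Term (F : Type) (ar : F → ℕ) : Type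
  | var : ℕ → Term F ar
  | app : (f : F) → (Fin (ar f) → Term F ar) → Term F ar

namespace Term

variable {F : Type} {ar : F → ℕ}

/-- The (finite) set of variables of a term. -/
def vars : Term F ar → Finset ℕ
  | var n => {n}
  | app _ ts => Finset.univ.biUnion fun i => (ts i).vars

/-- A term is ground if it contains no variables. -/
def Ground (t : Term F ar) : Prop := t.vars = ∅

/-- The number of occurrences of the variable `n` in a term. -/
def count (n : ℕ) : Term F ar → ℕ
  | var m => if m = n then 1 else 0
  | app _ ts => ∑ i, (ts i).count n

/-- A term is linear if no variable occurs twice in it. -/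
def Linear (t : Term F ar) : Prop := ∀ n, t.count n ≤ 1

/-- Applying a substitution to a term. -/
def subst (σ : ℕ → Term F ar) : Term F ar → Term F ar
  | var n => σ n
  | app f ts => app f fun i => (ts i).subst σ

/-- The subterm at a position (a list of argument indices), if the position is valid. -/
def subtermAt : Term F ar → List ℕ → Option (Term F ar)
  | t, [] => some t
  | var _, _ :: _ => none
  | app f ts, i :: p => if h : i < ar f then (ts ⟨i, h⟩).subtermAt p else none

/-- Replacing the subterm at a position, if the position is valid. -/
def replaceAt : Term F ar → List ℕ → Term F ar → Option (Term F ar)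
  | _, [], u => some u
  | var _, _ :: _, _ => none
  | app f ts, i :: p, u =>
      if h : i < ar f then
        ((ts ⟨i, h⟩).replaceAt p u).map fun s => app f (Function.update ts ⟨i, h⟩ s)
      else none

/-- `s.IsSubtermOf t` : `s` is a subterm of `t`. -/
def IsSubtermOf (s t : Term F ar) : Prop := ∃ p, t.subtermAt p = some s

/-- Relabelling of function symbols along an arity-preserving map of signatures. -/
def relabel {G : Type} {arG : G → ℕ} (φ : F → G) (h : ∀ f, arG (φ f) = ar f) :
    Term F ar → Term G arG
  | var n => var n
  | app f ts => app (φ f) fun i => (ts (Fin.cast (h f) i)).relabel φ h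

end Term

/-! ## Rewriting -/

/-- One-step rewriting with a set of rewrite rules: there are a position `p` of `s`,
a rule `(l, r)` and a substitution `σ` with `s|_p = lσ` and `t = s[rσ]_p`. -/
def Rewrites {F : Type} {ar : F → ℕ} (R : Set (Term F ar × Term F ar))
    (s t : Term F ar) : Prop :=
  ∃ (p : List ℕ) (l r : Term F ar) (σ : ℕ → Term F ar),
    (l, r) ∈ R ∧ s.subtermAt p = some (l.subst σ) ∧ s.replaceAt p (r.subst σ) = some t

/-- Many-step rewriting (reflexive–transitive closure). -/
abbrev RewritesStar {F : Type} {ar : F → ℕ} (R : Set (Term F ar × Term F ar)) :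
    Term F ar → Term F ar → Prop :=
  Relation.ReflTransGen (Rewrites R)

/-- A term rewriting system: a finite set of rules whose left-hand sides are not variables. -/
structure TRS (F : Type) (ar : F → ℕ) where
  rules : Set (Term F ar × Term F ar)
  finite : rules.Finite
  lhs_not_var : ∀ lr ∈ rules, ∀ n, lr.1 ≠ Term.var n

namespace TRS

variable {F : Type} {ar : F → ℕ}

def LeftLinear (R : TRS F ar) : Prop := ∀ lr ∈ R.rules, lr.1.Linear

def RightLinear (R : TRS F ar) : Prop := ∀ lr ∈ R.rules, lr.2.Linear

/-- A TRS is linear if all left- and right-hand sides are linear terms. -/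
def IsLinear (R : TRS F ar) : Prop := R.LeftLinear ∧ R.RightLinear

/-- A TRS is growing if every variable occurring both in the left- and the right-hand
side of a rule occurs at depth 1 in the left-hand side. -/
def Growing (R : TRS F ar) : Prop :=
  ∀ lr ∈ R.rules, ∀ n ∈ lr.1.vars, n ∈ lr.2.vars →
    ∀ (f : F) (ts : Fin (ar f) → Term F ar), lr.1 = Term.app f ts →
      ∀ i, n ∈ (ts i).vars → ts i = Term.var n

/-- A redex is an instance of a left-hand side. -/
def IsRedex (R : TRS F ar) (s : Term F ar) : Prop :=
  ∃ lr ∈ R.rules, ∃ σ : ℕ → Term F ar, s = lr.1.subst σ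

/-- `p` is a redex position of `s`. -/
def RedexPos (R : TRS F ar) (s : Term F ar) (p : List ℕ) : Prop :=
  ∃ u, s.subtermAt p = some u ∧ R.IsRedex u

def Reducible (R : TRS F ar) (s : Term F ar) : Prop := ∃ p, R.RedexPos s p

/-- A term is root-stable if it cannot be rewritten to a redex. -/
def RootStable (R : TRS F ar) (s : Term F ar) : Prop :=
  ¬ ∃ t, RewritesStar R.rules s t ∧ R.IsRedex t

/-- Ground normal forms. -/
def NFset (R : TRS F ar) : Set (Term F ar) := { t | t.Ground ∧ ¬ R.Reducible t }

/-- Ground redexes. -/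
def RedexSet (R : TRS F ar) : Set (Term F ar) := { t | t.Ground ∧ R.IsRedex t }

/-- Root-stable ground terms. -/
def RSset (R : TRS F ar) : Set (Term F ar) := { t | t.Ground ∧ R.RootStable t }

/-- Relabelling a TRS along an arity-preserving map of signatures. -/
def relabel {G : Type} {arG : G → ℕ} (R : TRS F ar) (φ : F → G)
    (h : ∀ f, arG (φ f) = ar f) : TRS G arG where
  rules := (fun lr => (lr.1.relabel φ h, lr.2.relabel φ h)) '' R.rules
  finite := R.finite.image _
  lhs_not_var := by
    rintro lr ⟨lr0, h0, rfl⟩ n hn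
    dsimp only at hn
    cases h1 : lr0.1 with
    | var m => exact absurd h1 (R.lhs_not_var lr0 h0 m)
    | app f ts =>
        rw [h1] at hn
        simp only [Term.relabel] at hn
        cases hn

end TRS

/-! ## Tree automata -/

/-- A transition rule `f(q₁,…,qₙ) → q` of a bottom-up tree automaton. -/
abbrev TARule (F : Type) (ar : F → ℕ) (Q : Type) : Type :=
  (f : F) × ((Fin (ar f) → Q) × Q)

/-- A (finite bottom-up) tree automaton without ε-transitions. -/
structure TreeAutomaton (F : Type) (ar : F → ℕ) (Q : Type) where
  trans : Set (TARule F ar Q)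
  final : Set Q

/-- `Reaches Δ t q` : the ground term `t` rewrites to the state `q` using the
transition rules `Δ`. -/
inductive Reaches {F : Type} {ar : F → ℕ} {Q : Type} (Δ : Set (TARule F ar Q)) :
    Term F ar → Q → Prop
  | app {f : F} {ts : Fin (ar f) → Term F ar} {qs : Fin (ar f) → Q} {q : Q} :
      (∀ i, Reaches Δ (ts i) (qs i)) → (⟨f, qs, q⟩ : TARule F ar Q) ∈ Δ →
      Reaches Δ (Term.app f ts) q

/-- `ReachesT Δ θ t q` : the term `t`, whose variables are interpreted as the states
given by `θ`, rewrites to the state `q` using the transition rules `Δ`. -/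
inductive ReachesT {F : Type} {ar : F → ℕ} {Q : Type} (Δ : Set (TARule F ar Q))
    (θ : ℕ → Q) : Term F ar → Q → Prop
  | var (n : ℕ) : ReachesT Δ θ (Term.var n) (θ n)
  | app {f : F} {ts : Fin (ar f) → Term F ar} {qs : Fin (ar f) → Q} {q : Q} :
      (∀ i, ReachesT Δ θ (ts i) (qs i)) → (⟨f, qs, q⟩ : TARule F ar Q) ∈ Δ →
      ReachesT Δ θ (Term.app f ts) q

/-- The language of a tree automaton: all ground terms reaching a final state. -/
def Lang {F : Type} {ar : F → ℕ} {Q : Type} (A : TreeAutomaton F ar Q) :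
    Set (Term F ar) :=
  { t | t.Ground ∧ ∃ q ∈ A.final, Reaches A.trans t q }

/-- A set of ground terms is recognizable if it is the language of some finite
tree automaton. -/
def Recognizable {F : Type} {ar : F → ℕ} (T : Set (Term F ar)) : Prop :=
  ∃ (Q : Type) (_ : Fintype Q) (A : TreeAutomaton F ar Q), T = Lang A

/-- The set of states occurring in a set of transition rules. -/
def statesOf {F : Type} {ar : F → ℕ} {Q : Type} (Γ : Set (TARule F ar Q)) : Set Q :=
  { q | ∃ ρ ∈ Γ, ρ.2.2 = q ∨ ∃ i, ρ.2.1 i = q }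

/-! ## The automaton `ℬ(ℛ)` -/

/-- The canonical representative of the state `⟨t⟩` of `ℬ(ℛ)`: all variables are
identified with the single state `⟨x⟩`, represented by `var 0`. -/
def stPattern {F : Type} {ar : F → ℕ} : Term F ar → Term F ar
  | Term.var _ => Term.var 0
  | Term.app f ts => Term.app f ts

/-- `S_ℛ`: the set of all subterms of arguments of left-hand sides of `ℛ`. -/
def SR {F : Type} {ar : F → ℕ} (R : TRS F ar) : Set (Term F ar) :=
  { s | ∃ lr ∈ R.rules, ∃ (f : F) (ts : Fin (ar f) → Term F ar),
        lr.1 = Term.app f ts ∧ ∃ i, s.IsSubtermOf (ts i) }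

/-- The representatives of the states of `ℬ(ℛ)`: the patterns of terms of `S_ℛ`,
together with `⟨x⟩`. -/
def BStateSet {F : Type} {ar : F → ℕ} (R : TRS F ar) : Set (Term F ar) :=
  stPattern '' SR R ∪ {Term.var 0}

/-- The matching rules of `ℬ(ℛ)` (with states encoded by `enc`):
`f(⟨t₁⟩,…,⟨tₙ⟩) → ⟨t⟩` for every `t = f(t₁,…,tₙ) ∈ S_ℛ`. -/
def BMatch {F : Type} {ar : F → ℕ} {Q : Type} (R : TRS F ar) (enc : Term F ar → Q) :
    Set (TARule F ar Q) :=
  { ρ | ∃ (f : F) (ts : Fin (ar f) → Term F ar), Term.app f ts ∈ SR R ∧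
        ρ = ⟨f, fun i => enc (stPattern (ts i)), enc (Term.app f ts)⟩ }

/-- The propagation rules `f(⟨x⟩,…,⟨x⟩) → ⟨x⟩` for every function symbol `f`. -/
def BProp {F : Type} {ar : F → ℕ} {Q : Type} (enc : Term F ar → Q) :
    Set (TARule F ar Q) :=
  { ρ | ∃ f : F, ρ = ⟨f, fun _ => enc (Term.var 0), enc (Term.var 0)⟩ }

/-- The transition rules of the automaton `ℬ(ℛ)`. -/
def BTrans {F : Type} {ar : F → ℕ} {Q : Type} (R : TRS F ar) (enc : Term F ar → Q) :
    Set (TARule F ar Q) :=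
  BMatch R enc ∪ BProp enc

/-- `Σ(t)`: the set of ground instances of the term `t`. -/
def GInst {F : Type} {ar : F → ℕ} (t : Term F ar) : Set (Term F ar) :=
  { s | s.Ground ∧ ∃ σ, s = t.subst σ }

/-! ## Saturation -/

/-- The state `qᵢ` associated to the argument `lᵢ` of a left-hand side in the
saturation rule: `lᵢθ` if `lᵢ` is a variable occurring in `r` (whose variable set
is `rv`), and `⟨lᵢ⟩` otherwise. -/
def satArg {F : Type} {ar : F → ℕ} {Q : Type} (enc : Term F ar → Q) (θ : ℕ → Q)
    (rv : Finset ℕ) : Term F ar → Q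
  | Term.var n => if n ∈ rv then θ n else enc (Term.var 0)
  | Term.app f ts => enc (Term.app f ts)

/-- One step of the saturation process: add all transition rules `f(q₁,…,qₙ) → q`
obtained from a rewrite rule `f(l₁,…,lₙ) → r` and a state substitution `θ`
(with values among the states `Qc` of the automaton) such that `rθ →_Γ* q`. -/
def satStep {F : Type} {ar : F → ℕ} {Q : Type} (R : TRS F ar) (enc : Term F ar → Q)
    (Qc : Set Q) (Γ : Set (TARule F ar Q)) : Set (TARule F ar Q) :=
  Γ ∪ { ρ | ∃ (f : F) (ls : Fin (ar f) → Term F ar) (r : Term F ar) (θ : ℕ → Q) (q : Q),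
        (Term.app f ls, r) ∈ R.rules ∧ (∀ n ∈ r.vars, θ n ∈ Qc) ∧ ReachesT Γ θ r q ∧
        ρ = ⟨f, fun i => satArg enc θ r.vars (ls i), q⟩ }

/-- The saturated set of transition rules: the closure of `Γ0` under the saturation
inference rule. -/
def satGamma {F : Type} {ar : F → ℕ} {Q : Type} (R : TRS F ar) (enc : Term F ar → Q)
    (Qc : Set Q) (Γ0 : Set (TARule F ar Q)) : Set (TARule F ar Q) :=
  ⋃ n, (satStep R enc Qc)^[n] Γ0

/-! ## The automaton `𝒞_T(ℛ)` and its extension `𝒞'_T(ℛ)` -/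

/-- The data of the construction of the automaton `𝒞_T(ℛ)`: an automaton `𝒜_T`
recognizing `T` with all states accessible and state set `QA`, together with an
encoding `enc` of the states `⟨t⟩` of `ℬ(ℛ)` into the common state type `Q`, such
that every state common to `𝒜_T` and `ℬ(ℛ)` accepts the same set of terms in both
automata. -/
structure CSetup {G : Type} [Fintype G] {arG : G → ℕ} (Q : Type) [Fintype Q]
    (Rg : TRS G arG) (T : Set (Term G arG)) where
  enc : Term G arG → Q
  A : TreeAutomaton G arG Q
  QA : Set Q
  henc : Set.InjOn enc (BStateSet Rg)
  hAstates : ∀ ρ ∈ A.trans, ρ.2.2 ∈ QA ∧ ∀ i, ρ.2.1 i ∈ QA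
  hfinal : A.final ⊆ QA
  hacc : ∀ q ∈ QA, ∃ s : Term G arG, s.Ground ∧ Reaches A.trans s q
  hground : ∃ s : Term G arG, s.Ground
  hshared : ∀ q ∈ QA ∩ enc '' BStateSet Rg, ∀ s : Term G arG,
      Reaches A.trans s q ↔ Reaches (BTrans Rg enc) s q
  hT : T = Lang A

namespace CSetup

variable {G : Type} [Fintype G] {arG : G → ℕ} {Q : Type} [Fintype Q]
  {Rg : TRS G arG} {T : Set (Term G arG)}

/-- The set of states of the automaton `𝒞_T(ℛ)`. -/
def Qstates (C : CSetup Q Rg T) : Set Q := C.QA ∪ C.enc '' BStateSet Rg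

/-- The transition rules of `𝒞_T(ℛ)` before saturation: the union of `𝒜_T` and `ℬ(ℛ)`. -/
def Γ0 (C : CSetup Q Rg T) : Set (TARule G arG Q) := C.A.trans ∪ BTrans Rg C.enc

/-- The transition rules of `𝒞_T(ℛ)` after saturation. -/
def Γsat (C : CSetup Q Rg T) : Set (TARule G arG Q) :=
  satGamma Rg C.enc C.Qstates C.Γ0

end CSetup

/-- The redex rules `f(⟪l₁⟫,…,⟪lₙ⟫) → q_r` for every left-hand side `f(l₁,…,lₙ)`. -/
def RedexRules {F : Type} {ar : F → ℕ} {Q : Type} (R : TRS F ar)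
    (enc2 : Term F ar → Q) (qr : Q) : Set (TARule F ar Q) :=
  { ρ | ∃ (f : F) (ls : Fin (ar f) → Term F ar) (r : Term F ar),
        (Term.app f ls, r) ∈ R.rules ∧
        ρ = ⟨f, fun i => enc2 (stPattern (ls i)), qr⟩ }

/-- The rules `f(⟨x⟩,…,q_r,…,⟨x⟩) → q_r`. -/
def QrProp {F : Type} {ar : F → ℕ} {Q : Type} (enc : Term F ar → Q) (qr : Q) :
    Set (TARule F ar Q) :=
  { ρ | ∃ (f : F) (j : Fin (ar f)),
        ρ = ⟨f, fun i => if i = j then qr else enc (Term.var 0), qr⟩ }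

/-- The data of the construction of the automaton `𝒞'_T(ℛ)`: `𝒞_T(ℛ)` extended with
a fresh copy `⟪t⟫` (encoded by `enc2`, with `⟪x⟫ = ⟨x⟩`) of the states of `ℬ(ℛ)` and
a fresh state `q_r`. -/
structure CpSetup {G : Type} [Fintype G] {arG : G → ℕ} (Q : Type) [Fintype Q]
    (Rg : TRS G arG) (T : Set (Term G arG)) extends CSetup Q Rg T where
  enc2 : Term G arG → Q
  qr : Q
  henc2 : Set.InjOn enc2 (BStateSet Rg)
  hx : enc2 (Term.var 0) = enc (Term.var 0)
  hfresh : (enc2 '' (BStateSet Rg \ {Term.var 0}) ∪ {qr}) ∩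
              (QA ∪ enc '' BStateSet Rg) = ∅
  hqr : qr ∉ enc2 '' (BStateSet Rg \ {Term.var 0})

namespace CpSetup

variable {G : Type} [Fintype G] {arG : G → ℕ} {Q : Type} [Fintype Q]
  {Rg : TRS G arG} {T : Set (Term G arG)}

/-- The transition rules `Γ'` of the automaton `𝒞'_T(ℛ)`. -/
def Γ' (C : CpSetup Q Rg T) : Set (TARule G arG Q) :=
  C.toCSetup.Γsat ∪ BMatch Rg C.enc2 ∪ RedexRules Rg C.enc2 C.qr ∪ QrProp C.enc C.qr

end CpSetup

/-! ## The signature `𝓖 = 𝓕 ∪ {•}` -/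

/-- The arity function of the extended signature `𝓕 ∪ {•}` (with `•` the fresh
constant `none`). -/
def arB {F : Type} (ar : F → ℕ) : Option F → ℕ
  | none => 0
  | some f => ar f

/-- The term `•`. -/
def bulletTm {F : Type} {ar : F → ℕ} : Term (Option F) (arB ar) :=
  Term.app none Fin.elim0

/-- The embedding of `𝒯(𝓕)`-terms into terms over `𝓕 ∪ {•}`. -/
def liftB {F : Type} {ar : F → ℕ} : Term F ar → Term (Option F) (arB ar) :=
  Term.relabel some (fun _ => rfl)

/-- A TRS over `𝓕` viewed as a TRS over `𝓕 ∪ {•}`. -/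
def TRS.liftB {F : Type} {ar : F → ℕ} (R : TRS F ar) : TRS (Option F) (arB ar) :=
  R.relabel some (fun _ => rfl)

/-- The TRS `ℛ• = ℛ ∪ {• → •}` over the signature `𝓕 ∪ {•}`. -/
def TRS.bullet {F : Type} {ar : F → ℕ} (R : TRS F ar) : TRS (Option F) (arB ar) where
  rules := R.liftB.rules ∪ {(bulletTm, bulletTm)}
  finite := R.liftB.finite.union (Set.finite_singleton _)
  lhs_not_var := by
    rintro lr (h | h) n hn
    · exact R.liftB.lhs_not_var lr h n hn
    · rw [Set.mem_singleton_iff] at h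
      rw [h] at hn
      cases hn

/-! ## The automaton `𝒟(ℛ)` -/

/-- For a symbol `g` and sets of states `Ss` for the arguments, the set
`g(S₁,…,Sₙ)↓` of states reachable from `g` applied to states chosen from the `Ssᵢ`. -/
def oneStep {G : Type} {arG : G → ℕ} {Q : Type} (Γ : Set (TARule G arG Q)) (g : G)
    (Ss : Fin (arG g) → Set Q) : Set Q :=
  { q | ∃ qs : Fin (arG g) → Q, (∀ i, qs i ∈ Ss i) ∧ (⟨g, qs, q⟩ : TARule G arG Q) ∈ Γ }

/-- `t↓` for a ground term `t`: the set of states reachable from `t`. -/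
def dn {G : Type} {arG : G → ℕ} {Q : Type} (Γ : Set (TARule G arG Q))
    (t : Term G arG) : Set Q :=
  { q | Reaches Γ t q }

/-- There is a rewrite rule with left-hand side `g(l₁,…,lₙ)` such that
`⟪lᵢ⟫ ∈ Ssᵢ` for all `i`. -/
def LhsMatch {G : Type} {arG : G → ℕ} {Q : Type} (Rg : TRS G arG)
    (enc2 : Term G arG → Q) (g : G) (Ss : Fin (arG g) → Set Q) : Prop :=
  ∃ (ls : Fin (arG g) → Term G arG) (r : Term G arG),
    (Term.app g ls, r) ∈ Rg.rules ∧ ∀ i, enc2 (stPattern (ls i)) ∈ Ss i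

/-- The transition rules of the automaton `𝒟(ℛ)` over `𝓕`, built from the transition
rules `Γ'` of `𝒞'_{NF}(ℛ)` over `𝓕 ∪ {•}`. -/
def DTrans {F : Type} {ar : F → ℕ} {Q : Type} (Rb : TRS (Option F) (arB ar))
    (Γ' : Set (TARule (Option F) (arB ar) Q))
    (enc enc2 : Term (Option F) (arB ar) → Q) :
    Set (TARule F ar (Set Q × Set Q)) :=
  { ρ | ∃ (f : F) (SP : Fin (ar f) → Set Q × Set Q) (P1 P2 : Set Q),
      P1 ⊆ (⋃ i : Fin (ar f), oneStep Γ' (some f)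
              (fun j => @ite _ (j = i) (instDecidableEqFin _ j i) (SP j).2 (SP j).1)) ∧
      (∀ (i : Fin (ar f)), ∀ q ∈ (SP i).2,
        (P1 ∩ oneStep Γ' (some f) (fun j => @ite _ (j = i) (instDecidableEqFin _ j i) {q} (SP j).1)).Nonempty) ∧
      ((LhsMatch Rb enc2 (some f) (fun i => (SP i).1) ∧ P2 = {enc (Term.var 0)}) ∨
       (¬ LhsMatch Rb enc2 (some f) (fun i => (SP i).1) ∧ P2 = (∅ : Set Q))) ∧
      ρ = ⟨f, SP, (oneStep Γ' (some f) (fun i => (SP i).1), P1 ∪ P2)⟩ }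

/-- The automaton `𝒟(ℛ)`: final states are the pairs `[S,P]` with `q_r ∈ S` and
`P ⊆ Q_f`. -/
def DAutomaton {F : Type} {ar : F → ℕ} {Q : Type} (Rb : TRS (Option F) (arB ar))
    (Γ' : Set (TARule (Option F) (arB ar) Q))
    (enc enc2 : Term (Option F) (arB ar) → Q) (qr : Q) (Qf : Set Q) :
    TreeAutomaton F ar (Set Q × Set Q) where
  trans := DTrans Rb Γ' enc enc2
  final := { SP | qr ∈ SP.1 ∧ SP.2 ⊆ Qf }

/-! ## Growing approximations -/

/-- `VarRepl t t'` : `t'` is obtained from `t` by replacing occurrences of variables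
by (possibly other) variables. -/
inductive VarRepl {F : Type} {ar : F → ℕ} : Term F ar → Term F ar → Prop
  | var (n m : ℕ) : VarRepl (Term.var n) (Term.var m)
  | app (f : F) (ts ts' : Fin (ar f) → Term F ar) :
      (∀ i, VarRepl (ts i) (ts' i)) → VarRepl (Term.app f ts) (Term.app f ts')

/-- `Rg` is a growing approximation of `R`: a right-linear growing TRS obtained from
`R` by replacing, in each right-hand side, occurrences of variables by variables not
occurring in the corresponding left-hand side. -/
def IsGrowingApprox {F : Type} {ar : F → ℕ} (R Rg : TRS F ar) : Prop :=
  Rg.RightLinear ∧ Rg.Growing ∧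
  (∀ lr ∈ Rg.rules, ∃ lr' ∈ R.rules, lr.1 = lr'.1 ∧ VarRepl lr'.2 lr.2 ∧
      ∀ n ∈ lr.2.vars, n ∉ lr.1.vars) ∧
  (∀ lr ∈ R.rules, ∃ lr' ∈ Rg.rules, lr.1 = lr'.1 ∧ VarRepl lr.2 lr'.2 ∧
      ∀ n ∈ lr'.2.vars, n ∉ lr'.1.vars)

/-! ## The signature `𝓖 = 𝓕 ∪ {f° : f ∈ 𝓕}` -/

/-- The arity function of the signature `𝓕 ∪ {f° : f ∈ 𝓕}` (`inl f` is `f`,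
`inr f` is `f°`). -/
def arC {F : Type} (ar : F → ℕ) : F ⊕ F → ℕ
  | Sum.inl f => ar f
  | Sum.inr f => ar f

/-- The embedding of `𝒯(𝓕)`-terms into terms over `𝓕 ∪ {f° : f ∈ 𝓕}`. -/
def liftC {F : Type} {ar : F → ℕ} : Term F ar → Term (F ⊕ F) (arC ar) :=
  Term.relabel Sum.inl (fun _ => rfl)

/-- `t°`: mark the root symbol of `t`. -/
def circTm {F : Type} {ar : F → ℕ} : Term F ar → Term (F ⊕ F) (arC ar)
  | Term.var n => Term.var n
  | Term.app f ts => Term.app (Sum.inr f) fun i => liftC (ts i)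

/-- A TRS over `𝓕` viewed as a TRS over `𝓕 ∪ {f° : f ∈ 𝓕}`. -/
def TRS.liftC {F : Type} {ar : F → ℕ} (R : TRS F ar) : TRS (F ⊕ F) (arC ar) :=
  R.relabel Sum.inl (fun _ => rfl)

/-- The TRS `𝒮° = 𝒮 ∪ {l° → r | l → r ∈ 𝒮}` over the signature `𝓕 ∪ {f° : f ∈ 𝓕}`. -/
def TRS.circ {F : Type} {ar : F → ℕ} (S : TRS F ar) : TRS (F ⊕ F) (arC ar) where
  rules := S.liftC.rules ∪ (fun lr => (circTm lr.1, _root_.liftC lr.2)) '' S.rules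
  finite := S.liftC.finite.union (S.finite.image _)
  lhs_not_var := by
    rintro lr (h | ⟨lr0, h0, rfl⟩) n hn
    · exact S.liftC.lhs_not_var lr h n hn
    · dsimp only at hn
      cases h1 : lr0.1 with
      | var m => exact absurd h1 (S.lhs_not_var lr0 h0 m)
      | app f ts =>
          rw [h1] at hn
          simp only [circTm] at hn
          cases hn

/-- The transitions added to `ℬ(𝒮°)` to obtain `𝒜_{REDEX_{𝒮°}}`:
`f(⟨l₁⟩,…,⟨lₙ⟩) → q_f` and `f°(⟨l₁⟩,…,⟨lₙ⟩) → q_f` for each left-hand side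
`f(l₁,…,lₙ)` of a rule of `𝒮`. -/
def CircRedexRules {F : Type} {ar : F → ℕ} {Q : Type} (S : TRS F ar)
    (enc : Term (F ⊕ F) (arC ar) → Q) (qf : Q) : Set (TARule (F ⊕ F) (arC ar) Q) :=
  { ρ | ∃ (f : F) (ls : Fin (ar f) → Term F ar) (r : Term F ar),
      (Term.app f ls, r) ∈ S.rules ∧
      (ρ = ⟨Sum.inl f, fun i => enc (stPattern (liftC (ls i))), qf⟩ ∨
       ρ = ⟨Sum.inr f, fun i => enc (stPattern (liftC (ls i))), qf⟩) }

/-! ## The automaton `𝒟'(ℛ,𝒮)` -/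

/-- The data of the construction of `𝒞'_{RS_{𝒮°}}(ℛ)`: the saturated automaton
`𝒞_{RS_{𝒮°}}(ℛ)`, a fresh copy `⟪t⟫` (encoded by `enc2`, with `⟪x⟫ = ⟨x⟩`) of the
states of `ℬ(ℛ)`, and an automaton `𝒞_{REDEX_𝒮}(𝒮)` (transitions `Etrans`, final
states `Qf'`) recognizing the non-`𝒮`-root-stable ground terms of `𝒯(𝓕)`. -/
structure CrsSetup {F : Type} [Fintype F] {ar : F → ℕ} (Q : Type) [Fintype Q]
    (R S : TRS F ar) extends CSetup Q R.liftC (TRS.RSset S.circ) where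
  enc2 : Term (F ⊕ F) (arC ar) → Q
  henc2 : Set.InjOn enc2 (BStateSet R.liftC)
  hx : enc2 (Term.var 0) = enc (Term.var 0)
  hfresh2 : (enc2 '' (BStateSet R.liftC \ {Term.var 0})) ∩
              (QA ∪ enc '' BStateSet R.liftC) = ∅
  Etrans : Set (TARule (F ⊕ F) (arC ar) Q)
  Qf' : Set Q
  hQf' : Qf' ⊆ statesOf Etrans
  hEfresh : statesOf Etrans ∩
      (QA ∪ enc '' BStateSet R.liftC ∪ enc2 '' (BStateSet R.liftC \ {Term.var 0})) = ∅
  hE : ∀ t : Term (F ⊕ F) (arC ar),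
      (t.Ground ∧ ∃ q ∈ Qf', Reaches Etrans t q) ↔
      (∃ s : Term F ar, t = liftC s ∧ s.Ground ∧ ¬ S.RootStable s)

namespace CrsSetup

variable {F : Type} [Fintype F] {ar : F → ℕ} {Q : Type} [Fintype Q] {R S : TRS F ar}

/-- The transition rules `Γ'` of the automaton `𝒞'_{RS_{𝒮°}}(ℛ)`. -/
def Γ' (C : CrsSetup Q R S) : Set (TARule (F ⊕ F) (arC ar) Q) :=
  C.toCSetup.Γsat ∪ BMatch R.liftC C.enc2 ∪ C.Etrans

end CrsSetup

/-- The transition rules of the automaton `𝒟'(ℛ,𝒮)` over `𝓕`, built from the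
transition rules `Γ'` of `𝒞'_{RS_{𝒮°}}(ℛ)`. -/
def DTransRS {F : Type} {ar : F → ℕ} {Q : Type} (Rg : TRS (F ⊕ F) (arC ar))
    (Γ' : Set (TARule (F ⊕ F) (arC ar) Q)) (enc2 : Term (F ⊕ F) (arC ar) → Q) :
    Set (TARule F ar (Set Q × Set Q)) :=
  { ρ | ∃ (f : F) (SP : Fin (ar f) → Set Q × Set Q) (P1 P2 : Set Q),
      P1 ⊆ (⋃ i : Fin (ar f), oneStep Γ' (Sum.inl f)
              (fun j => @ite _ (j = i) (instDecidableEqFin _ j i) (SP j).2 (SP j).1)) ∧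
      (∀ (i : Fin (ar f)), ∀ q ∈ (SP i).2,
        (P1 ∩ oneStep Γ' (Sum.inl f) (fun j => @ite _ (j = i) (instDecidableEqFin _ j i) {q} (SP j).1)).Nonempty) ∧
      ((LhsMatch Rg enc2 (Sum.inl f) (fun i => (SP i).1) ∧ P2.Nonempty ∧
          P2 ⊆ oneStep Γ' (Sum.inr f) (fun i => (SP i).1)) ∨
       (¬ LhsMatch Rg enc2 (Sum.inl f) (fun i => (SP i).1) ∧ P2 = (∅ : Set Q))) ∧
      ρ = ⟨f, SP, (oneStep Γ' (Sum.inl f) (fun i => (SP i).1), P1 ∪ P2)⟩ }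

/-- The automaton `𝒟'(ℛ,𝒮)`: final states are the pairs `[S,P]` with
`S ∩ Q_f' ≠ ∅` and `P ⊆ Q_f`. -/
def DAutomatonRS {F : Type} {ar : F → ℕ} {Q : Type} (Rg : TRS (F ⊕ F) (arC ar))
    (Γ' : Set (TARule (F ⊕ F) (arC ar) Q)) (enc2 : Term (F ⊕ F) (arC ar) → Q)
    (Qf' Qf : Set Q) : TreeAutomaton F ar (Set Q × Set Q) where
  trans := DTransRS Rg Γ' enc2
  final := { SP | (SP.1 ∩ Qf').Nonempty ∧ SP.2 ⊆ Qf }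
/-! The saturation adds transitions in rounds, and each added transition `f(q₁,…,qₙ) → q`
is justified by a rule `f(l₁,…,lₙ) → r`. By induction on the round, any run of a ground
term in a saturated automaton can be replaced by rewriting followed by a run in the
unsaturated automaton `𝒜_T ∪ ℬ(ℛ)`: a new transition at the root is undone by rewriting
`f(l₁,…,lₙ)σ` to `rσ`. Since `ℛ` is left-linear, a run of `ℬ(ℛ)` ending in `⟨lᵢ⟩` shows that
the argument is an instance of `lᵢ`, and these instances glue to one substitution; since `ℛ`
is growing, every variable of `r` that occurs in the left-hand side is some `lᵢ` itself, and
the other variables of `r` are instantiated by terms accessible to their states. Finally a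
run of `𝒜_T ∪ ℬ(ℛ)` splits into a run of `𝒜_T` or of `ℬ(ℛ)`, because the two automata agree
on their common states. -/

namespace Term

variable {F : Type} {ar : F → ℕ}

@[simp]
lemma mem_vars_app {n : ℕ} {f : F} {ts : Fin (ar f) → Term F ar} :
    n ∈ (app f ts).vars ↔ ∃ i, n ∈ (ts i).vars := by
  simp [vars]

lemma ground_app {f : F} {ts : Fin (ar f) → Term F ar} :
    (app f ts).Ground ↔ ∀ i, (ts i).Ground := by
  simp only [Ground, Finset.eq_empty_iff_forall_notMem, mem_vars_app]
  grind

lemma count_pos_of_mem_vars {n : ℕ} : ∀ {t : Term F ar}, n ∈ t.vars → 0 < t.count n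
  | var m, h => by simp_all [vars, count]
  | app f ts, h => by
    obtain ⟨i, hi⟩ := mem_vars_app.mp h
    exact (count_pos_of_mem_vars hi).trans_le
      (Finset.single_le_sum (f := fun j => (ts j).count n) (by simp) (Finset.mem_univ i))

lemma subst_congr {σ σ' : ℕ → Term F ar} :
    ∀ {t : Term F ar}, (∀ n ∈ t.vars, σ n = σ' n) → t.subst σ = t.subst σ'
  | var m, h => h m (by simp [vars])
  | app f ts, h => by
    simp only [subst]
    congr 1
    funext i
    exact subst_congr fun n hn => h n (mem_vars_app.mpr ⟨i, hn⟩)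

lemma subtermAt_cons {f : F} {ts : Fin (ar f) → Term F ar} (i : Fin (ar f)) (p : List ℕ) :
    (app f ts).subtermAt ((i : ℕ) :: p) = (ts i).subtermAt p := by
  rw [subtermAt, dif_pos i.isLt]

lemma subtermAt_append :
    ∀ (t : Term F ar) (p q : List ℕ),
      t.subtermAt (p ++ q) = (t.subtermAt p).bind fun s => s.subtermAt q
  | t, [], q => by simp [subtermAt]
  | var m, _ :: _, q => by simp [subtermAt]
  | app f ts, i :: p, q => by
    rw [List.cons_append, subtermAt, subtermAt]
    split
    · exact subtermAt_append _ p q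
    · simp

lemma IsSubtermOf.arg {f : F} {ts : Fin (ar f) → Term F ar} {u : Term F ar}
    (h : (app f ts).IsSubtermOf u) (i : Fin (ar f)) : (ts i).IsSubtermOf u := by
  obtain ⟨p, hp⟩ := h
  exact ⟨p ++ [(i : ℕ)], by simp [subtermAt_append, hp, subtermAt]⟩

lemma count_le_of_subtermAt (n : ℕ) :
    ∀ {t s : Term F ar} {p : List ℕ}, t.subtermAt p = some s → s.count n ≤ t.count n
  | t, s, [], h => by simp_all [subtermAt]
  | var m, s, _ :: _, h => by simp [subtermAt] at h
  | app f ts, s, i :: p, h => by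
    rw [subtermAt] at h
    split at h
    · exact (count_le_of_subtermAt n h).trans
        (Finset.single_le_sum (f := fun j => (ts j).count n) (by simp) (Finset.mem_univ _))
    · simp at h

lemma Linear.of_subtermAt {t s : Term F ar} {p : List ℕ} (hl : t.Linear)
    (h : t.subtermAt p = some s) : s.Linear :=
  fun n => (count_le_of_subtermAt n h).trans (hl n)

lemma Linear.eq_of_mem_vars {f : F} {ts : Fin (ar f) → Term F ar} (hl : (app f ts).Linear)
    {n : ℕ} {i j : Fin (ar f)} (hi : n ∈ (ts i).vars) (hj : n ∈ (ts j).vars) : i = j := by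
  by_contra hij
  have h2 : 2 ≤ ∑ k ∈ {i, j}, (ts k).count n := by
    rw [Finset.sum_pair hij]
    have := count_pos_of_mem_vars hi
    have := count_pos_of_mem_vars hj
    omega
  have := (h2.trans (Finset.sum_le_sum_of_subset (Finset.subset_univ _))).trans (hl n)
  omega

lemma Linear.exists_subst {f : F} {ts : Fin (ar f) → Term F ar} (hl : (app f ts).Linear)
    {us : Fin (ar f) → Term F ar} (h : ∀ i, ∃ σ, us i = (ts i).subst σ) (d : ℕ → Term F ar) :
    ∃ σ : ℕ → Term F ar, (∀ i, us i = (ts i).subst σ) ∧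
      ∀ n, (∀ i, n ∉ (ts i).vars) → σ n = d n := by
  classical
  choose σs hσs using h
  refine ⟨fun n => if hn : ∃ i, n ∈ (ts i).vars then σs hn.choose n else d n, fun i => ?_,
    fun n hn => dif_neg (by simpa using hn)⟩
  rw [hσs i]
  refine subst_congr fun n hn => ?_
  have hex : ∃ j, n ∈ (ts j).vars := ⟨i, hn⟩
  rw [dif_pos hex, hl.eq_of_mem_vars hn hex.choose_spec]

end Term

open Term

section Rewriting

variable {F : Type} {ar : F → ℕ} {R : Set (Term F ar × Term F ar)}

lemma rewrites_subst {l r : Term F ar} (h : (l, r) ∈ R) (σ : ℕ → Term F ar) :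
    Rewrites R (l.subst σ) (r.subst σ) :=
  ⟨[], l, r, σ, h, by simp [subtermAt], by simp [replaceAt]⟩

lemma Rewrites.update {f : F} (ts : Fin (ar f) → Term F ar) (i : Fin (ar f))
    {s t : Term F ar} (h : Rewrites R s t) :
    Rewrites R (app f (Function.update ts i s)) (app f (Function.update ts i t)) := by
  obtain ⟨p, l, r, σ, hm, h1, h2⟩ := h
  refine ⟨(i : ℕ) :: p, l, r, σ, hm, ?_, ?_⟩
  · rw [subtermAt_cons, Function.update_self, h1]
  · rw [replaceAt, dif_pos i.isLt, Fin.eta, Function.update_self, h2, Option.map_some,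
      Function.update_idem]

lemma rewritesStar_app {f : F} {ts ts' : Fin (ar f) → Term F ar}
    (h : ∀ i, RewritesStar R (ts i) (ts' i)) :
    RewritesStar R (app f ts) (app f ts') := by
  classical
  suffices ∀ s : Finset (Fin (ar f)), RewritesStar R (app f ts) (app f (s.piecewise ts' ts)) by
    simpa using this Finset.univ
  intro s
  induction s using Finset.induction_on with
  | empty => simpa using Relation.ReflTransGen.refl
  | insert a s ha ih =>
    set g := s.piecewise ts' ts
    have hg : Function.update g a (ts a) = g := by
      rw [← Finset.piecewise_eq_of_notMem s ts' ts ha, Function.update_eq_self]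
    have := Relation.ReflTransGen.lift (fun x => app f (Function.update g a x))
      (fun _ _ => Rewrites.update g a) _ _ (h a)
    rw [Finset.piecewise_insert]
    exact ih.trans (hg ▸ this)

end Rewriting

section Automata

variable {F : Type} {ar : F → ℕ} {Q : Type}

lemma Reaches.ground {Γ : Set (TARule F ar Q)} {t : Term F ar} {q : Q}
    (h : Reaches Γ t q) : t.Ground := by
  induction h with
  | app _ _ ih => exact ground_app.mpr ih

lemma Reaches.mono {Γ Γ' : Set (TARule F ar Q)} (hΓ : Γ ⊆ Γ') {t : Term F ar} {q : Q}
    (h : Reaches Γ t q) : Reaches Γ' t q := by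
  induction h with
  | app _ hρ ih => exact .app ih (hΓ hρ)

lemma Reaches.exists_of_iUnion {Γs : ℕ → Set (TARule F ar Q)} (hΓs : Monotone Γs)
    {t : Term F ar} {q : Q} (h : Reaches (⋃ n, Γs n) t q) : ∃ n, Reaches (Γs n) t q := by
  induction h with
  | @app f _ _ _ _ hρ ih =>
    choose ns hns using ih
    obtain ⟨m, hm⟩ := Set.mem_iUnion.mp hρ
    refine ⟨Finset.univ.sup ns ⊔ m, .app (fun i => (hns i).mono (hΓs ?_)) (hΓs le_sup_right hm)⟩
    exact (Finset.le_sup (Finset.mem_univ i)).trans le_sup_left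

lemma ReachesT.reaches_subst {Γ : Set (TARule F ar Q)} {θ : ℕ → Q} {r : Term F ar} {q : Q}
    (h : ReachesT Γ θ r q) {σ : ℕ → Term F ar} (hσ : ∀ n ∈ r.vars, Reaches Γ (σ n) (θ n)) :
    Reaches Γ (r.subst σ) q := by
  induction h with
  | var n => exact hσ n (by simp [vars])
  | app _ hρ ih => exact .app (fun i => ih i fun n hn => hσ n (mem_vars_app.mpr ⟨i, hn⟩)) hρ

end Automata

section BAutomaton

variable {F : Type} {ar : F → ℕ} {Q : Type} {R : TRS F ar} {enc : Term F ar → Q}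

lemma mem_SR_arg {f : F} {ts : Fin (ar f) → Term F ar} (h : app f ts ∈ SR R) (i : Fin (ar f)) :
    ts i ∈ SR R := by
  obtain ⟨lr, hlr, g, ls, hl, j, hsub⟩ := h
  exact ⟨lr, hlr, g, ls, hl, j, hsub.arg i⟩

lemma linear_of_mem_SR (hll : R.LeftLinear) {t : Term F ar} (ht : t ∈ SR R) : t.Linear := by
  obtain ⟨lr, hlr, g, ls, hl, j, p, hp⟩ := ht
  have hlin := hll lr hlr
  rw [hl] at hlin
  exact hlin.of_subtermAt (p := (j : ℕ) :: p) (by rw [subtermAt_cons, hp])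

lemma reaches_BTrans_x {t : Term F ar} (ht : t.Ground) :
    Reaches (BTrans R enc) t (enc (var 0)) := by
  induction t with
  | var n => simp [Ground, vars] at ht
  | app f ts ih =>
    exact .app (fun i => ih i (ground_app.mp ht i)) (Or.inr ⟨f, rfl⟩)

lemma reaches_BTrans_subst {σ : ℕ → Term F ar} (hσ : ∀ n, (σ n).Ground) :
    ∀ {t : Term F ar}, t ∈ SR R → Reaches (BTrans R enc) (t.subst σ) (enc (stPattern t))
  | var n, _ => reaches_BTrans_x (hσ n)
  | app f ts, ht =>
    .app (fun i => reaches_BTrans_subst hσ (mem_SR_arg ht i)) (Or.inl ⟨f, ts, ht, rfl⟩)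

lemma exists_subst_of_reaches_BTrans (hinj : Set.InjOn enc (BStateSet R))
    (hll : R.LeftLinear) {u : Term F ar} {q : Q} (hr : Reaches (BTrans R enc) u q) :
    ∀ t ∈ SR R, q = enc (stPattern t) → ∃ σ, u = t.subst σ := by
  induction hr with
  | @app g us qs q _ hρ ih =>
    rintro (_ | ⟨f, ts⟩) ht hq
    · exact ⟨fun _ => app g us, rfl⟩
    have htB : app f ts ∈ BStateSet R := .inl ⟨_, ht, rfl⟩
    rcases hρ with ⟨g, ts', hSR, ⟨⟩⟩ | ⟨g, ⟨⟩⟩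
    · obtain ⟨⟩ := hinj htB (.inl ⟨_, hSR, rfl⟩) hq.symm
      obtain ⟨σ, hσ, -⟩ := (linear_of_mem_SR hll ht).exists_subst
        (fun i => ih i _ (mem_SR_arg ht i) rfl) var
      exact ⟨σ, congrArg (app _) (funext hσ)⟩
    · cases hinj htB (.inr rfl) hq.symm

lemma BTrans_states {ρ : TARule F ar Q} (h : ρ ∈ BTrans R enc) :
    ρ.2.2 ∈ enc '' BStateSet R ∧ ∀ i, ρ.2.1 i ∈ enc '' BStateSet R := by
  rcases h with ⟨f, ts, hSR, rfl⟩ | ⟨f, rfl⟩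
  · exact ⟨⟨_, .inl ⟨_, hSR, rfl⟩, rfl⟩, fun i => ⟨_, .inl ⟨_, mem_SR_arg hSR i, rfl⟩, rfl⟩⟩
  · exact ⟨⟨_, .inr rfl, rfl⟩, fun _ => ⟨_, .inr rfl, rfl⟩⟩

end BAutomaton

def SimulatedBy {F : Type} {ar : F → ℕ} {Q : Type} (R : Set (Term F ar × Term F ar))
    (Γ Γ0 : Set (TARule F ar Q)) : Prop :=
  ∀ ⦃u q⦄, Reaches Γ u q → ∃ u', RewritesStar R u u' ∧ Reaches Γ0 u' q

lemma satStep_iterate_mono {F : Type} {ar : F → ℕ} {Q : Type} {R : TRS F ar}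
    {enc : Term F ar → Q} {Qc : Set Q} {Γ0 : Set (TARule F ar Q)} :
    Monotone fun n => (satStep R enc Qc)^[n] Γ0 :=
  fun _ _ h => Function.monotone_iterate_of_id_le (fun _ => Set.subset_union_left) h Γ0

namespace CSetup

variable {F : Type} [Fintype F] {ar : F → ℕ} {Q : Type} [Fintype Q] {R : TRS F ar}
  {T : Set (Term F ar)}

lemma reaches_of_reaches_Γ0 (C : CSetup Q R T) {u : Term F ar} {q : Q}
    (hr : Reaches C.Γ0 u q) :
    (q ∈ C.QA → Reaches C.A.trans u q) ∧
      (q ∈ C.enc '' BStateSet R → Reaches (BTrans R C.enc) u q) := by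
  induction hr with
  | @app f ts qs q _ hρ ih =>
    rcases hρ with hA | hB
    · have hst := C.hAstates _ hA
      have HA : Reaches C.A.trans (app f ts) q := .app (fun i => (ih i).1 (hst.2 i)) hA
      exact ⟨fun _ => HA, fun hq => (C.hshared q ⟨hst.1, hq⟩ _).mp HA⟩
    · have hst := BTrans_states hB
      have HB : Reaches (BTrans R C.enc) (app f ts) q := .app (fun i => (ih i).2 (hst.2 i)) hB
      exact ⟨fun hq => (C.hshared q ⟨hq, hst.1⟩ _).mpr HB, fun _ => HB⟩

lemma exists_reaches_Γ0 (C : CSetup Q R T) {q : Q} (hq : q ∈ C.Qstates) :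
    ∃ w, Reaches C.Γ0 w q := by
  rcases hq with hQA | ⟨p, hp, rfl⟩
  · obtain ⟨w, -, hw⟩ := C.hacc q hQA
    exact ⟨w, hw.mono Set.subset_union_left⟩
  · obtain ⟨g, hg⟩ := C.hground
    rcases hp with ⟨t, ht, rfl⟩ | rfl
    · exact ⟨_, (reaches_BTrans_subst (σ := fun _ => g) (fun _ => hg) ht).mono
        Set.subset_union_right⟩
    · exact ⟨g, (reaches_BTrans_x hg).mono Set.subset_union_right⟩

/-- Variables of `r` occurring in the left-hand side are arguments `lᵢ` by growingness;
the others get an accessible witness of their state. -/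
lemma exists_subst_of_reaches_satArg (C : CSetup Q R T) (hll : R.LeftLinear)
    (hgrow : R.Growing) {f : F} {ls : Fin (ar f) → Term F ar} {r : Term F ar} {θ : ℕ → Q}
    (hrule : (app f ls, r) ∈ R.rules) (hθ : ∀ m ∈ r.vars, θ m ∈ C.Qstates)
    {us : Fin (ar f) → Term F ar}
    (hus : ∀ i, Reaches C.Γ0 (us i) (satArg C.enc θ r.vars (ls i))) :
    ∃ σ, (∀ i, us i = (ls i).subst σ) ∧ ∀ m ∈ r.vars, Reaches C.Γ0 (σ m) (θ m) := by
  classical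
  have hinst : ∀ i, ∃ σ, us i = (ls i).subst σ := by
    intro i
    cases hli : ls i with
    | var m => exact ⟨fun _ => us i, rfl⟩
    | app g ss =>
      have hSR : ls i ∈ SR R := ⟨_, hrule, f, ls, rfl, i, [], by simp [subtermAt]⟩
      have hq : satArg C.enc θ r.vars (ls i) = C.enc (stPattern (ls i)) := by rw [hli]; rfl
      have hB := (C.reaches_of_reaches_Γ0 (hus i)).2 (hq ▸ ⟨_, .inl ⟨_, hSR, rfl⟩, rfl⟩)
      rw [← hli]
      exact exists_subst_of_reaches_BTrans C.henc hll hB _ hSR hq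
  choose w hw using fun m (hm : m ∈ r.vars) => C.exists_reaches_Γ0 (hθ m hm)
  obtain ⟨σ, hσ, hσd⟩ := (hll _ hrule).exists_subst hinst
    (fun m => if hm : m ∈ r.vars then w m hm else var m)
  refine ⟨σ, hσ, fun m hm => ?_⟩
  by_cases hex : ∃ i, m ∈ (ls i).vars
  · obtain ⟨i, hi⟩ := hex
    have hli : ls i = var m := hgrow _ hrule m (mem_vars_app.mpr ⟨i, hi⟩) hm f ls rfl i hi
    have hus' := hus i
    rw [hσ i, hli] at hus'
    simpa [subst, satArg, hm] using hus'
  · rw [hσd m (not_exists.mp hex), dif_pos hm]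
    exact hw m hm

lemma simulatedBy_satStep (C : CSetup Q R T) (hll : R.LeftLinear) (hgrow : R.Growing)
    {Γ : Set (TARule F ar Q)} (hΓ : C.Γ0 ⊆ Γ) (hsim : SimulatedBy R.rules Γ C.Γ0) :
    SimulatedBy R.rules (satStep R C.enc C.Qstates Γ) C.Γ0 := by
  intro u q h
  induction h with
  | @app f ts qs q _ hρ ih =>
    choose ts' hts' hr using ih
    have hargs : RewritesStar R.rules (app f ts) (app f ts') := rewritesStar_app hts'
    rcases hρ with hold | ⟨f, ls, r, θ, q, hrule, hθ, hrθ, ⟨⟩⟩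
    · obtain ⟨u', hu', hr'⟩ := hsim (.app (fun i => (hr i).mono hΓ) hold)
      exact ⟨u', hargs.trans hu', hr'⟩
    · obtain ⟨σ, hσ, hσθ⟩ := C.exists_subst_of_reaches_satArg hll hgrow hrule hθ hr
      obtain ⟨u', hu', hr'⟩ := hsim (hrθ.reaches_subst fun m hm => (hσθ m hm).mono hΓ)
      have hroot : Rewrites R.rules (app f ts') (r.subst σ) :=
        congrArg (app f) (funext hσ) ▸ rewrites_subst hrule σ
      exact ⟨u', hargs.trans (.head hroot hu'), hr'⟩

lemma simulatedBy_Γsat (C : CSetup Q R T) (hll : R.LeftLinear) (hgrow : R.Growing) :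
    SimulatedBy R.rules C.Γsat C.Γ0 := by
  have hiter : ∀ n, SimulatedBy R.rules ((satStep R C.enc C.Qstates)^[n] C.Γ0) C.Γ0 := by
    intro n
    induction n with
    | zero => exact fun u _ h => ⟨u, .refl, h⟩
    | succ n ih =>
      rw [Function.iterate_succ_apply']
      exact C.simulatedBy_satStep hll hgrow (satStep_iterate_mono (Nat.zero_le n)) ih
  intro u q h
  obtain ⟨n, hn⟩ := h.exists_of_iUnion satStep_iterate_mono
  exact hiter n hn

end CSetup

theorem statement4_general {G : Type} [Fintype G] {arG : G → ℕ} {Q : Type} [Fintype Q]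
    (R : TRS G arG) (hlin : R.IsLinear) (hgrow : R.Growing)
    (T : Set (Term G arG)) (C : CSetup Q R T)
    (s : Term G arG) :
    (∀ t ∈ SR R ∪ {Term.var 0},
        Reaches C.Γsat s (C.enc (stPattern t)) →
          ∃ u ∈ GInst t, RewritesStar R.rules s u) ∧
    (∀ q ∈ C.A.final, Reaches C.Γsat s q → ∃ t ∈ T, RewritesStar R.rules s t) := by
  have hsim := C.simulatedBy_Γsat hlin.1 hgrow
  refine ⟨fun t ht hr => ?_, fun q hq hr => ?_⟩
  · obtain ⟨u, hsu, hu⟩ := hsim hr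
    refine ⟨u, ⟨hu.ground, ?_⟩, hsu⟩
    rcases ht with ht | rfl
    · have hB := (C.reaches_of_reaches_Γ0 hu).2 ⟨_, .inl ⟨t, ht, rfl⟩, rfl⟩
      exact exists_subst_of_reaches_BTrans C.henc hlin.1 hB t ht rfl
    · exact ⟨fun _ => u, rfl⟩
  · obtain ⟨u, hsu, hu⟩ := hsim hr
    rw [C.hT]
    exact ⟨u, ⟨hu.ground, q, hq, (C.reaches_of_reaches_Γ0 hu).1 (C.hfinal hq)⟩, hsu⟩

/-- Let `ℛ` be a linear growing TRS over `𝓖` and `𝒞_T(ℛ)` the saturated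
automaton.  If `s →_{𝒞_T(ℛ)}* q` for a ground term `s`, then (1) if `q = ⟨t⟩` with
`t ∈ S_ℛ ∪ {x}` then `s` rewrites in `ℛ` to a ground instance of `t`, and (2) if `q` is
a final state then `s ∈ (→_ℛ*)[T]`. -/
theorem statement4 {G : Type} [Fintype G] {arG : G → ℕ} {Q : Type} [Fintype Q]
    (R : TRS G arG) (hlin : R.IsLinear) (hgrow : R.Growing)
    (T : Set (Term G arG)) (C : CSetup Q R T)
    (s : Term G arG) (hs : s.Ground) :
    (∀ t ∈ SR R ∪ {Term.var 0},
        Reaches C.Γsat s (C.enc (stPattern t)) →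
          ∃ u ∈ GInst t, RewritesStar R.rules s u) ∧
    (∀ q ∈ C.A.final, Reaches C.Γsat s q → ∃ t ∈ T, RewritesStar R.rules s t) :=
  statement4_general R hlin hgrow T C s
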